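/- Let w be a segmented Smirnov word of length n with k ascents and l descents whose maximal letter is at most m and with no block starting with m. The q-enumerator, with respect to sminv, over all words obtained from w by inserting s occurrences of m each at the beginning of a distinct block, equals q^{binom(s,2)} [n−k−l choose s]_q · q^{sminv(w)}. -/

import Mathlib

/-- A word `w` together with a set `B` of block-start positions is a segmented
Smirnov word: block starts are valid positions, position `0` starts a block,
letters are positive, and two adjacent letters inside a common block differ. -/
def IsSSW (w : List ℕ) (B : Finset ℕ) : Prop :=
  (∀ b ∈ B, b < w.length) ∧ (w ≠ [] → 0 ∈ B) ∧ (∀ x ∈ w, 0 < x) ∧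
  (∀ i, i + 1 < w.length → (i + 1) ∉ B → w.getD i 0 ≠ w.getD (i + 1) 0)

def AscentAt (w : List ℕ) (B : Finset ℕ) (i : ℕ) : Prop :=
  i + 1 < w.length ∧ (i + 1) ∉ B ∧ w.getD i 0 < w.getD (i + 1) 0

def DescentAt (w : List ℕ) (B : Finset ℕ) (i : ℕ) : Prop :=
  i + 1 < w.length ∧ (i + 1) ∉ B ∧ w.getD (i + 1) 0 < w.getD i 0

noncomputable def numAsc (w : List ℕ) (B : Finset ℕ) : ℕ := Set.ncard {i | AscentAt w B i}

noncomputable def numDesc (w : List ℕ) (B : Finset ℕ) : ℕ := Set.ncard {i | DescentAt w B i}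

/-- `(i,j)` is a sminversion of the segmented word `(w, B)`. -/
def Sminversion (w : List ℕ) (B : Finset ℕ) (i j : ℕ) : Prop :=
  i < j ∧ j < w.length ∧ w.getD j 0 < w.getD i 0 ∧
    (j ∈ B ∨ w.getD i 0 < w.getD (j - 1) 0 ∨
     (i + 1 ≠ j ∧ w.getD (j - 1) 0 = w.getD i 0 ∧ (j - 1) ∈ B) ∨
     (i + 1 ≠ j ∧ 2 ≤ j ∧ w.getD (j - 1) 0 < w.getD (j - 2) 0 ∧
       w.getD (j - 1) 0 = w.getD i 0))

noncomputable def sminv (w : List ℕ) (B : Finset ℕ) : ℕ :=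
  Set.ncard {p : ℕ × ℕ | Sminversion w B p.1 p.2}

/-- The q-analogue `[m]_q = 1 + q + ⋯ + q^{m-1}` as a polynomial. -/
noncomputable def qInt (m : ℕ) : Polynomial ℕ := ∑ i ∈ Finset.range m, Polynomial.X ^ i

/-- The Gaussian binomial coefficient, via the q-Pascal recurrence. -/
noncomputable def qbinom : ℕ → ℕ → Polynomial ℕ
  | _, 0 => 1
  | 0, _ + 1 => 0
  | n + 1, k + 1 => qbinom n k + Polynomial.X ^ (k + 1) * qbinom n (k + 1)

/-- Insert the letter `m` immediately before every (original) position in `S`;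
the first argument is the index of the head of the remaining list. -/
def multiInsert (m : ℕ) (S : Finset ℕ) : ℕ → List ℕ → List ℕ
  | i, [] => if i ∈ S then [m] else []
  | i, x :: xs => (if i ∈ S then [m] else []) ++ x :: multiInsert m S (i + 1) xs

/-!
Inserting `m` before the block starts `S ⊆ B` moves the letter at position `p` to
`p + #{x ∈ S | x ≤ p}` and puts the new letter before `b ∈ S` at `b + #{x ∈ S | x < b}`.
Since `m` is the largest letter and differs from every block-initial letter of `w`, the
sminversions of the new word are exactly the images of the old ones together with the pairs
(new `m` before `b`, old block start `b' > b`). So `sminv` grows by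
`∑ b ∈ S, #{b' ∈ B | b < b'}`, and by the q-Pascal recurrence the generating function of this
statistic over the `s`-subsets of the `#B = n - k - l` block starts is
`q^(s choose 2) [#B choose s]_q`.
-/

open Finset Polynomial

section Positions

variable (S : Finset ℕ)

/-- Position, after inserting a letter before each position of `S`, of the letter that
was at position `p`. -/
def origPos (p : ℕ) : ℕ := p + #(S.filter (· ≤ p))

/-- Position of the letter inserted before original position `b ∈ S`. -/
def insPos (b : ℕ) : ℕ := b + #(S.filter (· < b))

variable {S}

lemma card_filter_le_eq (p : ℕ) :
    #(S.filter (· ≤ p)) = #(S.filter (· < p)) + if p ∈ S then 1 else 0 := by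
  split_ifs with hp
  · rw [← card_insert_of_notMem (by simp : p ∉ S.filter (· < p))]
    congr 1
    ext x
    simp only [mem_filter, mem_insert, le_iff_eq_or_lt]
    grind
  · congr 1
    refine filter_congr fun x hx => ⟨fun hle => hle.lt_of_ne ?_, le_of_lt⟩
    rintro rfl
    exact hp hx

lemma origPos_eq_insPos_add (p : ℕ) : origPos S p = insPos S p + if p ∈ S then 1 else 0 := by
  rw [origPos, insPos, card_filter_le_eq]; ring

lemma origPos_eq_insPos_add_one {b : ℕ} (hb : b ∈ S) : origPos S b = insPos S b + 1 := by
  simp [origPos_eq_insPos_add, hb]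

lemma origPos_eq_insPos {p : ℕ} (hp : p ∉ S) : origPos S p = insPos S p := by
  simp [origPos_eq_insPos_add, hp]

lemma insPos_succ (p : ℕ) : insPos S (p + 1) = origPos S p + 1 := by
  simp only [insPos, origPos, Nat.lt_succ_iff]; ring

lemma le_origPos (p : ℕ) : p ≤ origPos S p := Nat.le_add_right _ _

lemma origPos_le (p : ℕ) : origPos S p ≤ p + #S :=
  Nat.add_le_add_left (card_le_card (filter_subset _ _)) p

lemma insPos_le (b : ℕ) : insPos S b ≤ b + #S :=
  Nat.add_le_add_left (card_le_card (filter_subset _ _)) b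

lemma origPos_strictMono : StrictMono (origPos S) := fun p p' h => by
  have : #(S.filter (· ≤ p)) ≤ #(S.filter (· ≤ p')) :=
    card_le_card (monotone_filter_right S fun x _ (hx : x ≤ p) => hx.trans h.le)
  unfold origPos; omega

lemma insPos_strictMono : StrictMono (insPos S) := fun b b' h => by
  have : #(S.filter (· < b)) ≤ #(S.filter (· < b')) :=
    card_le_card (monotone_filter_right S fun x _ (hx : x < b) => hx.trans h)
  unfold insPos; omega

lemma origPos_lt_insPos {p b : ℕ} (h : p < b) : origPos S p < insPos S b := by
  have := (insPos_strictMono (S := S)).monotone (Nat.succ_le_of_lt h)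
  rw [insPos_succ] at this; omega

lemma insPos_lt_origPos {b p : ℕ} (hb : b ∈ S) (h : b ≤ p) : insPos S b < origPos S p := by
  have := (origPos_strictMono (S := S)).monotone h
  rw [origPos_eq_insPos_add_one hb] at this; omega

lemma origPos_ne_insPos (p : ℕ) {b : ℕ} (hb : b ∈ S) : origPos S p ≠ insPos S b := by
  rcases lt_or_ge p b with h | h
  · exact (origPos_lt_insPos h).ne
  · exact (insPos_lt_origPos hb h).ne'

lemma origPos_sub_one_of_mem {p : ℕ} (hp : p ∈ S) : origPos S p - 1 = insPos S p := by
  rw [origPos_eq_insPos_add_one hp]; rfl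

lemma origPos_sub_one_of_notMem {p : ℕ} (hp : p ∉ S) : origPos S p - 1 = origPos S (p - 1) := by
  rw [origPos_eq_insPos hp]
  rcases p with _ | p
  · simp [insPos, origPos, filter_eq_empty_iff.mpr fun x hx (h : x = 0) => hp (h ▸ hx)]
  · rw [insPos_succ]; rfl

lemma origPos_mem_image_insPos_iff {B : Finset ℕ} {p : ℕ} :
    origPos S p ∈ B.image (insPos S) ↔ p ∈ B ∧ p ∉ S := by
  constructor
  · rintro h
    obtain ⟨b, hb, hbp⟩ := mem_image.mp h
    by_cases hbS : b ∈ S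
    · exact absurd hbp.symm (origPos_ne_insPos p hbS)
    · rw [← origPos_eq_insPos hbS] at hbp
      obtain rfl := origPos_strictMono.injective hbp
      exact ⟨hb, hbS⟩
  · rintro ⟨hpB, hpS⟩
    exact mem_image.mpr ⟨p, hpB, (origPos_eq_insPos hpS).symm⟩

lemma exists_origPos_or_insPos {n q : ℕ} (hS : ∀ x ∈ S, x < n) (hq : q < n + #S) :
    (∃ p < n, origPos S p = q) ∨ ∃ b ∈ S, insPos S b = q := by
  set A := (range n).image (origPos S) ∪ S.image (insPos S)
  have hsub : A ⊆ range (n + #S) := by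
    intro x hx
    rw [mem_range]
    rcases mem_union.mp hx with hx | hx
    · obtain ⟨p, hp, rfl⟩ := mem_image.mp hx
      have := origPos_le (S := S) p
      have := mem_range.mp hp
      omega
    · obtain ⟨b, hb, rfl⟩ := mem_image.mp hx
      have := insPos_le (S := S) b
      have := hS b hb
      omega
  have hdisj : Disjoint ((range n).image (origPos S)) (S.image (insPos S)) := by
    simp only [disjoint_left, mem_image, mem_range, not_exists, not_and]
    rintro _ ⟨p, -, rfl⟩ b hb
    exact (origPos_ne_insPos p hb).symm
  have hcard : #A = #(range (n + #S)) := by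
    rw [card_union_of_disjoint hdisj, card_image_of_injective _ origPos_strictMono.injective,
      card_image_of_injective _ insPos_strictMono.injective, card_range, card_range]
  have hq : q ∈ A := eq_of_subset_of_card_le hsub hcard.ge ▸ mem_range.mpr hq
  simpa [A, mem_union, mem_image] using hq

end Positions

lemma getD_le_of_forall_le {l : List ℕ} {m : ℕ} (hm : ∀ x ∈ l, x ≤ m) (q : ℕ) :
    l.getD q 0 ≤ m := by
  rw [List.getD_eq_getElem?_getD]
  cases h : l[q]? with
  | none => exact Nat.zero_le m
  | some x => exact hm x (List.mem_of_getElem? h)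

section MultiInsert

variable {m : ℕ} {S : Finset ℕ}

lemma card_inter_Ico_eq {i j : ℕ} (h : i < j) :
    #(S ∩ Ico i j) = #(S ∩ Ico (i + 1) j) + if i ∈ S then 1 else 0 := by
  have hIco : Ico i j = insert i (Ico (i + 1) j) := by ext x; simp; omega
  rw [hIco]
  split_ifs with hi
  · rw [inter_insert_of_mem hi, card_insert_of_notMem (by simp)]
  · rw [inter_insert_of_notMem hi, add_zero]

lemma mem_multiInsert {x i : ℕ} {xs : List ℕ} (hx : x ∈ multiInsert m S i xs) :
    x ∈ xs ∨ x = m := by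
  induction xs generalizing i with
  | nil => unfold multiInsert at hx; split_ifs at hx <;> simp_all
  | cons y ys ih =>
    unfold multiInsert at hx
    rcases List.mem_append.mp hx with hx | hx
    · split_ifs at hx <;> simp_all
    · rcases List.mem_cons.mp hx with rfl | hx
      · simp
      · rcases ih hx with h | h <;> simp [h]

lemma length_multiInsert (i : ℕ) (xs : List ℕ) :
    (multiInsert m S i xs).length = xs.length + #(S ∩ Ico i (i + xs.length + 1)) := by
  induction xs generalizing i with
  | nil => rw [card_inter_Ico_eq (by omega)]; simp [multiInsert, apply_ite]
  | cons x xs ih =>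
    rw [card_inter_Ico_eq (by simp), List.length_cons, show i + (xs.length + 1) + 1 =
      i + 1 + xs.length + 1 by ring]
    by_cases hi : i ∈ S <;> simp [multiInsert, hi, ih] <;> ring

lemma drop_multiInsert (i p : ℕ) (xs : List ℕ) (hp : p ≤ xs.length) :
    (multiInsert m S i xs).drop (p + #(S ∩ Ico i (i + p))) =
      multiInsert m S (i + p) (xs.drop p) := by
  induction p generalizing i xs with
  | zero => simp
  | succ p ih =>
    obtain ⟨x, xs, rfl⟩ := List.exists_cons_of_length_pos (by omega : 0 < xs.length)
    have hidx : p + 1 + #(S ∩ Ico i (i + (p + 1))) =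
        (if i ∈ S then 1 else 0) + 1 + (p + #(S ∩ Ico (i + 1) (i + 1 + p))) := by
      rw [card_inter_Ico_eq (by omega), show i + (p + 1) = i + 1 + p by ring]; ring
    rw [hidx, ← List.drop_drop, ← List.drop_drop, show i + (p + 1) = i + 1 + p by ring,
      List.drop_succ_cons, ← ih (i + 1) xs (by simpa using hp)]
    by_cases hi : i ∈ S <;> simp [multiInsert, hi]

lemma drop_multiInsert_insPos (w : List ℕ) {p : ℕ} (hp : p ≤ w.length) :
    (multiInsert m S 0 w).drop (insPos S p) = multiInsert m S p (w.drop p) := by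
  have h := drop_multiInsert (m := m) (S := S) 0 p w hp
  rwa [zero_add, ← filter_mem_eq_inter, filter_congr (q := (· < p)) (by simp)] at h

lemma getD_multiInsert_insPos (w : List ℕ) {b : ℕ} (hb : b ∈ S) (hbw : b ≤ w.length) :
    (multiInsert m S 0 w).getD (insPos S b) 0 = m := by
  have h := congrArg (·[0]?) (drop_multiInsert_insPos (m := m) (S := S) w hbw)
  simp only [List.getElem?_drop, add_zero] at h
  rw [List.getD_eq_getElem?_getD, h]
  rcases w.drop b with _ | ⟨x, xs⟩ <;> simp [multiInsert, hb]

lemma getD_multiInsert_origPos (w : List ℕ) {p : ℕ} (hp : p < w.length) :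
    (multiInsert m S 0 w).getD (origPos S p) 0 = w.getD p 0 := by
  have h := congrArg (·[if p ∈ S then 1 else 0]?)
    (drop_multiInsert_insPos (m := m) (S := S) w hp.le)
  simp only [List.getElem?_drop] at h
  rw [List.getD_eq_getElem?_getD, origPos_eq_insPos_add, h, List.drop_eq_getElem_cons hp]
  by_cases hpS : p ∈ S <;> simp [multiInsert, hpS, List.getElem?_eq_getElem hp]

lemma getD_multiInsert_le {w : List ℕ} (hm : ∀ x ∈ w, x ≤ m) (q : ℕ) :
    (multiInsert m S 0 w).getD q 0 ≤ m :=
  getD_le_of_forall_le (fun x hx => (mem_multiInsert hx).elim (hm x) le_of_eq) q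

end MultiInsert

/-- The condition on `w (j-1)` in the last two clauses of `Sminversion`. -/
def IsInitialOrFall (w : List ℕ) (B : Finset ℕ) (p : ℕ) : Prop :=
  p ∈ B ∨ (1 ≤ p ∧ w.getD p 0 < w.getD (p - 1) 0)

lemma sminversion_iff {w : List ℕ} {B : Finset ℕ} {i j : ℕ} :
    Sminversion w B i j ↔ i < j ∧ j < w.length ∧ w.getD j 0 < w.getD i 0 ∧
      (j ∈ B ∨ w.getD i 0 < w.getD (j - 1) 0 ∨
        (i + 1 ≠ j ∧ w.getD (j - 1) 0 = w.getD i 0 ∧ IsInitialOrFall w B (j - 1))) := by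
  have h2 : 2 ≤ j ↔ 1 ≤ j - 1 := by omega
  simp only [Sminversion, IsInitialOrFall, Nat.sub_sub, h2]
  tauto

lemma sminversion_finite (w : List ℕ) (B : Finset ℕ) :
    {p : ℕ × ℕ | Sminversion w B p.1 p.2}.Finite :=
  ((Set.finite_Iio w.length).prod (Set.finite_Iio w.length)).subset
    fun _ ⟨hij, hj, _⟩ => ⟨hij.trans hj, hj⟩

section Insertion

variable {w : List ℕ} {B S : Finset ℕ} {m : ℕ}

lemma getD_lt_of_mem_blocks (hm : ∀ x ∈ w, x ≤ m)
    (hno : ∀ b ∈ B, w.getD b 0 ≠ m) {b : ℕ} (hb : b ∈ B) : w.getD b 0 < m :=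
  (getD_le_of_forall_le hm b).lt_of_ne (hno b hb)

lemma IsSSW.one_le_of_notMem (h : IsSSW w B) {p : ℕ} (hp : p < w.length) (hpB : p ∉ B) :
    1 ≤ p :=
  Nat.one_le_iff_ne_zero.mpr fun hp0 => hpB (hp0 ▸ h.2.1 (List.ne_nil_of_length_pos (by omega)))

lemma length_multiInsert_zero (hS : ∀ x ∈ S, x < w.length) :
    (multiInsert m S 0 w).length = w.length + #S := by
  rw [length_multiInsert, inter_eq_left.mpr fun x hx => by simpa using (hS x hx).le]

lemma origPos_lt_length_multiInsert (hS : ∀ x ∈ S, x < w.length) {p : ℕ} (hp : p < w.length) :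
    origPos S p < (multiInsert m S 0 w).length := by
  have := origPos_le (S := S) p
  rw [length_multiInsert_zero hS]
  omega

lemma isInitialOrFall_origPos_iff (h : IsSSW w B) (hm : ∀ x ∈ w, x ≤ m)
    (hno : ∀ b ∈ B, w.getD b 0 ≠ m) (hSB : S ⊆ B) {p : ℕ} (hp : p < w.length) :
    IsInitialOrFall (multiInsert m S 0 w) (B.image (insPos S)) (origPos S p) ↔
      IsInitialOrFall w B p := by
  by_cases hpS : p ∈ S
  · refine iff_of_true (Or.inr ⟨?_, ?_⟩) (Or.inl (hSB hpS))
    · rw [origPos_eq_insPos_add_one hpS]; omega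
    · rw [origPos_sub_one_of_mem hpS, getD_multiInsert_insPos w hpS hp.le,
        getD_multiInsert_origPos w hp]
      exact getD_lt_of_mem_blocks hm hno (hSB hpS)
  · unfold IsInitialOrFall
    rw [origPos_mem_image_insPos_iff, origPos_sub_one_of_notMem hpS]
    by_cases hpB : p ∈ B
    · exact iff_of_true (Or.inl ⟨hpB, hpS⟩) (Or.inl hpB)
    · have hp1 := h.one_le_of_notMem hp hpB
      rw [getD_multiInsert_origPos w hp, getD_multiInsert_origPos w (by omega)]
      simp [hpB, hp1, hp1.trans (le_origPos p)]

lemma not_sminversion_insPos (hm : ∀ x ∈ w, x ≤ m) {b : ℕ} (hb : b ∈ S)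
    (hbw : b ≤ w.length) (q : ℕ) :
    ¬ Sminversion (multiInsert m S 0 w) (B.image (insPos S)) q (insPos S b) := by
  rintro ⟨-, -, hlt, -⟩
  rw [getD_multiInsert_insPos w hb hbw] at hlt
  exact (getD_multiInsert_le hm q).not_gt hlt

lemma sminversion_insPos_origPos_iff (h : IsSSW w B) (hm : ∀ x ∈ w, x ≤ m)
    (hno : ∀ b ∈ B, w.getD b 0 ≠ m) (hSB : S ⊆ B) {b j : ℕ} (hb : b ∈ S)
    (hj : j < w.length) :
    Sminversion (multiInsert m S 0 w) (B.image (insPos S)) (insPos S b) (origPos S j) ↔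
      j ∈ B ∧ b < j := by
  have hbw : b < w.length := h.1 b (hSB hb)
  rw [sminversion_iff, getD_multiInsert_insPos w hb hbw.le, getD_multiInsert_origPos w hj]
  constructor
  · rintro ⟨hlt, -, -, hcl⟩
    have hbj : b ≤ j := not_lt.mp fun hjb => (origPos_lt_insPos hjb).not_gt hlt
    suffices j ∈ B ∧ j ≠ b from ⟨this.1, hbj.lt_of_ne this.2.symm⟩
    rcases hcl with hjB | hgt | ⟨hne, heq, hfall⟩
    · obtain ⟨hjB, hjS⟩ := origPos_mem_image_insPos_iff.mp hjB
      exact ⟨hjB, fun e => hjS (e ▸ hb)⟩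
    · exact absurd hgt (getD_multiInsert_le hm _).not_gt
    · by_cases hjS : j ∈ S
      · refine ⟨hSB hjS, ?_⟩
        rintro rfl
        exact hne (origPos_eq_insPos_add_one hb).symm
      · exfalso
        -- the letter before `j` would equal `m`, yet it starts a block or falls from above `m`
        rw [origPos_sub_one_of_notMem hjS] at heq hfall
        rcases hfall with hmem | ⟨-, hgt⟩
        · obtain ⟨hB, -⟩ := origPos_mem_image_insPos_iff.mp hmem
          rw [getD_multiInsert_origPos w (by omega)] at heq
          exact hno _ hB heq
        · rw [heq] at hgt
          exact (getD_multiInsert_le hm _).not_gt hgt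
  · rintro ⟨hjB, hbj⟩
    refine ⟨insPos_lt_origPos hb hbj.le, ?_, getD_lt_of_mem_blocks hm hno hjB, ?_⟩
    · exact origPos_lt_length_multiInsert (fun x hx => h.1 x (hSB hx)) hj
    by_cases hjS : j ∈ S
    · rw [origPos_sub_one_of_mem hjS, getD_multiInsert_insPos w hjS hj.le,
        origPos_eq_insPos_add_one hjS, Ne, add_left_inj]
      exact Or.inr (Or.inr ⟨insPos_strictMono.injective.ne hbj.ne, rfl,
        Or.inl (mem_image_of_mem _ (hSB hjS))⟩)
    · exact Or.inl (origPos_mem_image_insPos_iff.mpr ⟨hjB, hjS⟩)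

lemma sminversion_origPos_origPos_iff (h : IsSSW w B) (hm : ∀ x ∈ w, x ≤ m)
    (hno : ∀ b ∈ B, w.getD b 0 ≠ m) (hSB : S ⊆ B) {i j : ℕ} (hj : j < w.length) :
    Sminversion (multiInsert m S 0 w) (B.image (insPos S)) (origPos S i) (origPos S j) ↔
      Sminversion w B i j := by
  rw [sminversion_iff, sminversion_iff, origPos_strictMono.lt_iff_lt]
  refine and_congr_right fun hij => ?_
  simp only [origPos_lt_length_multiInsert (fun x hx => h.1 x (hSB hx)) hj, hj, true_and]
  rw [getD_multiInsert_origPos w hj, getD_multiInsert_origPos w (hij.trans hj)]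
  refine and_congr_right fun _ => ?_
  by_cases hjB : j ∈ B
  · refine iff_of_true ?_ (Or.inl hjB)
    by_cases hjS : j ∈ S
    · rw [origPos_sub_one_of_mem hjS, getD_multiInsert_insPos w hjS hj.le]
      rcases (getD_le_of_forall_le hm i).lt_or_eq with hlt | heq
      · exact Or.inr (Or.inl hlt)
      · refine Or.inr (Or.inr ⟨?_, heq.symm, Or.inl (mem_image_of_mem _ (hSB hjS))⟩)
        rw [origPos_eq_insPos_add_one hjS]
        exact (Nat.succ_lt_succ (origPos_lt_insPos hij)).ne
    · exact Or.inl (origPos_mem_image_insPos_iff.mpr ⟨hjB, hjS⟩)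
  · have hjS : j ∉ S := fun hjS => hjB (hSB hjS)
    have hj1 := h.one_le_of_notMem hj hjB
    have hsucc : origPos S j = origPos S (j - 1) + 1 := by
      rw [origPos_eq_insPos hjS, ← insPos_succ, Nat.sub_add_cancel hj1]
    have hne : origPos S i + 1 ≠ origPos S j ↔ i + 1 ≠ j := by
      rw [hsucc, Ne, Ne, add_left_inj, origPos_strictMono.injective.eq_iff]
      omega
    rw [origPos_sub_one_of_notMem hjS, origPos_mem_image_insPos_iff,
      getD_multiInsert_origPos w (by omega), hne,
      isInitialOrFall_origPos_iff h hm hno hSB (by omega)]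
    simp [hjB]

lemma setOf_sminversion_multiInsert (h : IsSSW w B) (hm : ∀ x ∈ w, x ≤ m)
    (hno : ∀ b ∈ B, w.getD b 0 ≠ m) (hSB : S ⊆ B) :
    {p : ℕ × ℕ | Sminversion (multiInsert m S 0 w) (B.image (insPos S)) p.1 p.2} =
      Prod.map (origPos S) (origPos S) '' {p | Sminversion w B p.1 p.2} ∪
        Prod.map (insPos S) (origPos S) '' {p | p.1 ∈ S ∧ p.2 ∈ B ∧ p.1 < p.2} := by
  have hS : ∀ x ∈ S, x < w.length := fun x hx => h.1 x (hSB hx)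
  ext ⟨q₁, q₂⟩
  simp only [Set.mem_ofPred_eq, Set.mem_union, Set.mem_image, Prod.exists, Prod.map, Prod.mk.injEq]
  constructor
  · intro hq
    have hq₂ : q₂ < w.length + #S := length_multiInsert_zero hS ▸ hq.2.1
    obtain ⟨j, hj, rfl⟩ | ⟨b, hb, rfl⟩ := exists_origPos_or_insPos hS hq₂
    · obtain ⟨i, -, rfl⟩ | ⟨b, hb, rfl⟩ := exists_origPos_or_insPos hS (hq.1.trans hq₂)
      · exact Or.inl ⟨i, j, (sminversion_origPos_origPos_iff h hm hno hSB hj).mp hq, rfl, rfl⟩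
      · exact Or.inr ⟨b, j, ⟨hb, (sminversion_insPos_origPos_iff h hm hno hSB hb hj).mp hq⟩,
          rfl, rfl⟩
    · exact absurd hq (not_sminversion_insPos hm hb (hS b hb).le q₁)
  · rintro (⟨i, j, hij, rfl, rfl⟩ | ⟨b, j, ⟨hb, hjb⟩, rfl, rfl⟩)
    · exact (sminversion_origPos_origPos_iff h hm hno hSB hij.2.1).mpr hij
    · exact (sminversion_insPos_origPos_iff h hm hno hSB hb (h.1 j hjb.1)).mpr hjb

lemma sminv_multiInsert (h : IsSSW w B) (hm : ∀ x ∈ w, x ≤ m)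
    (hno : ∀ b ∈ B, w.getD b 0 ≠ m) (hSB : S ⊆ B) :
    sminv (multiInsert m S 0 w) (B.image (insPos S)) =
      sminv w B + ∑ b ∈ S, #(B.filter (b < ·)) := by
  have hnew : {p : ℕ × ℕ | p.1 ∈ S ∧ p.2 ∈ B ∧ p.1 < p.2} =
      ↑((S ×ˢ B).filter fun p => p.1 < p.2) := by
    ext; simp [and_assoc]
  have hdisj : Disjoint (Prod.map (origPos S) (origPos S) '' {p | Sminversion w B p.1 p.2})
      (Prod.map (insPos S) (origPos S) '' {p | p.1 ∈ S ∧ p.2 ∈ B ∧ p.1 < p.2}) := by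
    simp only [Set.disjoint_left, Set.mem_image, not_exists, not_and]
    rintro _ ⟨p, -, rfl⟩ q ⟨hq, -⟩ he
    exact origPos_ne_insPos p.1 hq (congrArg Prod.fst he).symm
  rw [sminv, sminv, setOf_sminversion_multiInsert h hm hno hSB,
    Set.ncard_union_eq hdisj ((sminversion_finite w B).image _) (hnew ▸ (finite_toSet _).image _),
    Set.ncard_image_of_injective _ (origPos_strictMono.injective.prodMap
      origPos_strictMono.injective),
    Set.ncard_image_of_injective _ (insPos_strictMono.injective.prodMap
      origPos_strictMono.injective), hnew, Set.ncard_coe_finset, card_filter, sum_product]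
  simp only [card_filter]

end Insertion

section QBinomial

variable {α : Type*} [LinearOrder α]

lemma card_filter_gt_insert_of_lt {B : Finset α} {a b : α} (ha : a ∉ B) (hba : b < a) :
    #((insert a B).filter (b < ·)) = #(B.filter (b < ·)) + 1 := by
  rw [filter_insert, if_pos hba, card_insert_of_notMem fun h => ha (mem_filter.mp h).1]

lemma sum_powersetCard_X_pow_sum_card_filter_lt (B : Finset α) (s : ℕ) :
    ∑ S ∈ powersetCard s B, (X : ℕ[X]) ^ (∑ b ∈ S, #(B.filter (b < ·))) =
      X ^ s.choose 2 * qbinom #B s := by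
  induction B using Finset.induction_on_max generalizing s with
  | empty => cases s <;> simp [qbinom]
  | insert a B ha ih =>
    have haB : a ∉ B := fun h => (ha a h).false
    have hshift : ∀ S ⊆ B, ∑ b ∈ S, #((insert a B).filter (b < ·)) =
        ∑ b ∈ S, #(B.filter (b < ·)) + #S := fun S hS => by
      rw [sum_congr rfl fun b hb => card_filter_gt_insert_of_lt haB (ha b (hS hb)),
        sum_add_distrib, card_eq_sum_ones]
    have htop : #((insert a B).filter (a < ·)) = 0 :=
      card_eq_zero.mpr (filter_false_of_mem fun b hb => by
        rcases mem_insert.mp hb with rfl | hb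
        exacts [lt_irrefl b, (ha b hb).not_gt])
    cases s with
    | zero => simp [qbinom]
    | succ s =>
      have hinj : Set.InjOn (insert a) (powersetCard s B : Set (Finset α)) :=
        fun S hS T hT hST => by
          rw [← erase_insert fun h => haB ((mem_powersetCard.mp hS).1 h),
            ← erase_insert fun h => haB ((mem_powersetCard.mp hT).1 h), hST]
      have hdisj : Disjoint (powersetCard (s + 1) B) ((powersetCard s B).image (insert a)) :=
        disjoint_left.mpr fun S hS hS' => by
          obtain ⟨T, -, rfl⟩ := mem_image.mp hS'
          exact haB ((mem_powersetCard.mp hS).1 (mem_insert_self a T))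
      rw [powersetCard_succ_insert haB, sum_union hdisj, sum_image hinj, card_insert_of_notMem haB]
      have h₁ : ∑ S ∈ powersetCard (s + 1) B,
          (X : ℕ[X]) ^ (∑ b ∈ S, #((insert a B).filter (b < ·))) =
            X ^ (s + 1) * (X ^ (s + 1).choose 2 * qbinom #B (s + 1)) := by
        rw [← ih, mul_sum]
        refine sum_congr rfl fun S hS => ?_
        rw [hshift S (mem_powersetCard.mp hS).1, (mem_powersetCard.mp hS).2, pow_add, mul_comm]
      have h₂ : ∑ S ∈ powersetCard s B,
          (X : ℕ[X]) ^ (∑ b ∈ insert a S, #((insert a B).filter (b < ·))) =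
            X ^ s * (X ^ s.choose 2 * qbinom #B s) := by
        rw [← ih, mul_sum]
        refine sum_congr rfl fun S hS => ?_
        obtain ⟨hSB, hScard⟩ := mem_powersetCard.mp hS
        rw [sum_insert fun h => haB (hSB h), htop, zero_add, hshift S hSB, hScard, pow_add,
          mul_comm]
      rw [h₁, h₂, qbinom, Nat.choose_succ_succ, Nat.choose_one_right]
      ring

end QBinomial

lemma ncard_setOf_eq_card_filter_range {P : ℕ → Prop} [DecidablePred P] {N : ℕ}
    (hP : ∀ i, P i → i < N) : {i | P i}.ncard = #((range N).filter P) := by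
  rw [← Set.ncard_coe_finset]
  congr 1
  ext i
  simpa using fun hi => hP i hi

/-- Every adjacent pair `(i, i+1)` is an ascent, a descent, or crosses into a new block. -/
lemma IsSSW.card_eq_length_sub_numAsc_sub_numDesc {w : List ℕ} {B : Finset ℕ} (h : IsSSW w B) :
    #B = w.length - numAsc w B - numDesc w B := by
  classical
  obtain ⟨hBlt, hB0, -, hdiff⟩ := h
  cases hn : w.length with
  | zero =>
    rw [Nat.zero_sub, Nat.zero_sub, card_eq_zero, eq_empty_iff_forall_notMem]
    exact fun b hb => by simpa [hn] using hBlt b hb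
  | succ n =>
    have hasc : numAsc w B = #{i ∈ range n | AscentAt w B i} :=
      ncard_setOf_eq_card_filter_range fun i hi => by have := hi.1; omega
    have hdesc : numDesc w B = #{i ∈ range n | DescentAt w B i} :=
      ncard_setOf_eq_card_filter_range fun i hi => by have := hi.1; omega
    have hB : #B = #((range n).filter (· + 1 ∈ B)) + 1 := by
      have h0 : 0 ∈ B := hB0 (List.ne_nil_of_length_pos (by omega))
      have hBr : (range (n + 1)).filter (· ∈ B) = B := by
        ext b
        simpa [← hn] using hBlt b
      rw [← congrArg card hBr, card_filter, sum_range_succ', ← card_filter, if_pos h0]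
    have hsplit : ∀ i ∈ range n, ((if AscentAt w B i then 1 else 0) +
        (if DescentAt w B i then 1 else 0) + (if i + 1 ∈ B then 1 else 0) : ℕ) = 1 := by
      intro i hi
      have hi : i + 1 < w.length := by simp at hi; omega
      by_cases hiB : i + 1 ∈ B
      · simp [AscentAt, DescentAt, hiB]
      · rcases lt_or_gt_of_ne (hdiff i hi hiB) with hlt | hgt
        · rw [if_pos (show AscentAt w B i from ⟨hi, hiB, hlt⟩),
            if_neg fun hd : DescentAt w B i => hd.2.2.not_gt hlt, if_neg hiB]
        · rw [if_neg fun ha : AscentAt w B i => ha.2.2.not_gt hgt,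
            if_pos (show DescentAt w B i from ⟨hi, hiB, hgt⟩), if_neg hiB]
    have hcount := sum_congr rfl hsplit
    rw [sum_add_distrib, sum_add_distrib, ← card_filter, ← card_filter, ← card_filter,
      sum_const, card_range, smul_eq_mul, mul_one] at hcount
    omega

/-- Double-fall insertion: for a segmented Smirnov word `w` of length `n` with
`k` ascents, `l` descents, all letters `≤ m`, and no block starting with `m`,
the q-enumerator (w.r.t. `sminv`) of the words obtained by inserting `s`
occurrences of `m`, each at the beginning of a distinct block, is
`q^{binom(s,2)} [n-k-l choose s]_q · q^{sminv w}`. -/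
theorem stmt6 (w : List ℕ) (B : Finset ℕ) (m k l s : ℕ) (h : IsSSW w B)
    (hm : ∀ x ∈ w, x ≤ m) (hno : ∀ b ∈ B, w.getD b 0 ≠ m)
    (hk : numAsc w B = k) (hl : numDesc w B = l) :
    ∑ S ∈ Finset.powersetCard s B,
      Polynomial.X ^ sminv (multiInsert m S 0 w)
        (B.image (fun b => b + (S.filter (· < b)).card)) =
    Polynomial.X ^ Nat.choose s 2 * qbinom (w.length - k - l) s *
      Polynomial.X ^ sminv w B := by
  rw [← hk, ← hl, ← h.card_eq_length_sub_numAsc_sub_numDesc,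
    ← sum_powersetCard_X_pow_sum_card_filter_lt, sum_mul]
  refine sum_congr rfl fun S hS => ?_
  change X ^ sminv (multiInsert m S 0 w) (B.image (insPos S)) = _
  rw [sminv_multiInsert h hm hno (mem_powersetCard.mp hS).1, pow_add, mul_comm]
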